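/- The splitting set theorem: if U is a splitting set for a propositional normal program P (i.e., for every rule whose head is in U, all body atoms are in U), then M is an answer set of P if and only if M = X ∪ Y where X is an answer set of bot_U(P) (the rules all of whose atoms lie in U) and Y is an answer set of e_U(P \ bot_U(P), X). -/

import Mathlib

/-- A propositional normal rule: optional head (none = constraint),
positive body atoms, negative body atoms. -/
structure Rule (A : Type) where
  head : Option A
  pos : Set A
  neg : Set A

/-- The body of a rule is true in interpretation `M`. -/
def Rule.bodyTrue {A : Type} (r : Rule A) (M : Set A) : Prop :=
  r.pos ⊆ M ∧ ∀ a ∈ r.neg, a ∉ M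

/-- A rule is satisfied by `M`. -/
def Rule.sat {A : Type} (r : Rule A) (M : Set A) : Prop :=
  r.bodyTrue M → ∃ a, r.head = some a ∧ a ∈ M

/-- `M` is a model of program `P`. -/
def isModel {A : Type} (P : Set (Rule A)) (M : Set A) : Prop :=
  ∀ r ∈ P, r.sat M

/-- The (GL/FLP) reduct of `P` w.r.t. `M`: keep rules whose negative body is
disjoint from `M`, deleting the negative literals. -/
def reduct {A : Type} (P : Set (Rule A)) (M : Set A) : Set (Rule A) :=
  {r' | ∃ r ∈ P, (∀ a ∈ r.neg, a ∉ M) ∧ r' = ⟨r.head, r.pos, ∅⟩}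

/-- `M` is an answer set (stable model) of `P`: it is the least model of the reduct. -/
def isAnswerSet {A : Type} (P : Set (Rule A)) (M : Set A) : Prop :=
  isModel (reduct P M) M ∧ ∀ N, isModel (reduct P M) N → M ⊆ N

/-- Atoms occurring in a rule. -/
def Rule.atoms {A : Type} (r : Rule A) : Set A :=
  {a | r.head = some a} ∪ r.pos ∪ r.neg

/-- Atoms occurring in a program. -/
def progAtoms {A : Type} (P : Set (Rule A)) : Set A :=
  ⋃ r ∈ P, r.atoms

/-- Head atoms of a program. -/
def progHeads {A : Type} (P : Set (Rule A)) : Set A :=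
  {a | ∃ r ∈ P, r.head = some a}

/-- The fact `a ←`. -/
def factRule {A : Type} (a : A) : Rule A := ⟨some a, ∅, ∅⟩

/-- The constraint `← a`. -/
def constraintRule {A : Type} (a : A) : Rule A := ⟨none, {a}, ∅⟩

/-- `fix(U, M)`: facts for the atoms of `U` in `M`, constraints for the atoms
of `U` not in `M`. -/
def fixProg {A : Type} (U : Set A) (M : Set A) : Set (Rule A) :=
  {r | ∃ a ∈ M ∩ U, r = factRule a} ∪ {r | ∃ a ∈ U \ M, r = constraintRule a}

/-- Partial evaluation `e_U(P, X)`: delete rules whose body over `U` conflicts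
with `X`, and remove all `U`-literals from the remaining rules. -/
def partialEval {A : Type} (U X : Set A) (P : Set (Rule A)) : Set (Rule A) :=
  {r' | ∃ r ∈ P,
      (∀ a ∈ r.pos, a ∈ U → a ∈ X) ∧ (∀ a ∈ r.neg, a ∈ U → a ∉ X) ∧
      r' = ⟨r.head, r.pos \ U, r.neg \ U⟩}

/-- `U` is a splitting set for `P`: every rule whose head is in `U` has all its
atoms in `U`. -/
def isSplittingSet {A : Type} (U : Set A) (P : Set (Rule A)) : Prop :=
  ∀ r ∈ P, (∃ a, r.head = some a ∧ a ∈ U) → r.atoms ⊆ U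

/-- `bot_U(P)`: the rules of `P` all of whose atoms lie in `U`. -/
def botU {A : Type} (U : Set A) (P : Set (Rule A)) : Set (Rule A) :=
  {r ∈ P | r.atoms ⊆ U}

/-!
Every rule of `P` either lies in `bot_U(P)` or, as `U` splits `P`, has its head outside `U`.
So for `X ⊆ U`, `Y` disjoint from `U` and `X' ∪ Y'` split the same way, `X' ∪ Y'` is a model of
the reduct `P^(X ∪ Y)` iff `X'` is a model of `bot_U(P)^X` and `Y'` one of
`e_U(P \ bot_U(P), X)^Y`, as long as `X' = X`; each direction needs only one of the inclusions.
Models of a reduct are closed under intersection (each rule has at most one head atom), so the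
least models on the two sides correspond.
-/

section Splitting

variable {A : Type}

theorem Rule.pos_subset_atoms (r : Rule A) : r.pos ⊆ r.atoms := fun _ h => Or.inl (Or.inr h)

theorem Rule.neg_subset_atoms (r : Rule A) : r.neg ⊆ r.atoms := fun _ h => Or.inr h

theorem Rule.head_mem_atoms {r : Rule A} {a : A} (h : r.head = some a) : a ∈ r.atoms :=
  Or.inl (Or.inl h)

theorem isModel_reduct_iff {P : Set (Rule A)} {M N : Set A} :
    isModel (reduct P M) N ↔
      ∀ r ∈ P, (∀ a ∈ r.neg, a ∉ M) → r.pos ⊆ N → ∃ a, r.head = some a ∧ a ∈ N := by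
  constructor
  · intro h r hr hneg hpos
    exact h ⟨r.head, r.pos, ∅⟩ ⟨r, hr, hneg, rfl⟩ ⟨hpos, fun _ ha => ha.elim⟩
  · rintro h _ ⟨r, hr, hneg, rfl⟩ ⟨hpos, -⟩
    exact h r hr hneg hpos

theorem isModel_reduct_partialEval_iff {U X Y N : Set A} {Q : Set (Rule A)} :
    isModel (reduct (partialEval U X Q) Y) N ↔
      ∀ r ∈ Q, (∀ a ∈ r.pos, a ∈ U → a ∈ X) → (∀ a ∈ r.neg, a ∈ U → a ∉ X) →
        (∀ a ∈ r.neg \ U, a ∉ Y) → r.pos \ U ⊆ N → ∃ a, r.head = some a ∧ a ∈ N := by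
  rw [isModel_reduct_iff]
  constructor
  · intro h r hr hposX hnegX hnegY hposN
    exact h ⟨r.head, r.pos \ U, r.neg \ U⟩ ⟨r, hr, hposX, hnegX, rfl⟩ hnegY hposN
  · rintro h _ ⟨r, hr, hposX, hnegX, rfl⟩ hnegY hposN
    exact h r hr hposX hnegX hnegY hposN

theorem isModel_reduct_inter {Q : Set (Rule A)} {M N₁ N₂ : Set A}
    (h₁ : isModel (reduct Q M) N₁) (h₂ : isModel (reduct Q M) N₂) :
    isModel (reduct Q M) (N₁ ∩ N₂) := by
  rw [isModel_reduct_iff] at *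
  intro r hr hneg hpos
  obtain ⟨a, ha, haN₁⟩ := h₁ r hr hneg (hpos.trans Set.inter_subset_left)
  obtain ⟨b, hb, hbN₂⟩ := h₂ r hr hneg (hpos.trans Set.inter_subset_right)
  obtain rfl : a = b := Option.some.inj (ha.symm.trans hb)
  exact ⟨a, ha, haN₁, hbN₂⟩

theorem isModel_reduct_inter_of_head_mem {Q : Set (Rule A)} {M N S : Set A}
    (hS : ∀ r ∈ Q, ∀ a, r.head = some a → a ∈ S) (h : isModel (reduct Q M) N) :
    isModel (reduct Q M) (N ∩ S) := by
  rw [isModel_reduct_iff] at *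
  intro r hr hneg hpos
  obtain ⟨a, ha, haN⟩ := h r hr hneg (hpos.trans Set.inter_subset_left)
  exact ⟨a, ha, haN, hS r hr a ha⟩

theorem isAnswerSet.subset_of_head_mem {Q : Set (Rule A)} {M S : Set A}
    (h : isAnswerSet Q M) (hS : ∀ r ∈ Q, ∀ a, r.head = some a → a ∈ S) : M ⊆ S :=
  (h.2 _ (isModel_reduct_inter_of_head_mem hS h.1)).trans Set.inter_subset_right

variable {U X Y X' Y' : Set A} {P : Set (Rule A)}

theorem head_mem_of_mem_botU {r : Rule A} {a : A} (hr : r ∈ botU U P) (ha : r.head = some a) :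
    a ∈ U :=
  hr.2 (r.head_mem_atoms ha)

theorem head_notMem_of_mem_diff_botU (hU : isSplittingSet U P) {r : Rule A} {a : A}
    (hr : r ∈ P \ botU U P) (ha : r.head = some a) : a ∉ U :=
  fun haU => hr.2 ⟨hr.1, hU r hr.1 ⟨a, ha, haU⟩⟩

theorem head_notMem_of_mem_partialEval (hU : isSplittingSet U P) {r : Rule A} {a : A}
    (hr : r ∈ partialEval U X (P \ botU U P)) (ha : r.head = some a) : a ∉ U := by
  obtain ⟨r₀, hr₀, -, -, rfl⟩ := hr
  exact head_notMem_of_mem_diff_botU hU hr₀ ha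

theorem isModel_reduct_botU (hY : Disjoint Y U) (hY' : Disjoint Y' U)
    (h : isModel (reduct P (X ∪ Y)) (X' ∪ Y')) : isModel (reduct (botU U P) X) X' := by
  rw [isModel_reduct_iff] at *
  intro r hr hneg hpos
  have hnegXY : ∀ a ∈ r.neg, a ∉ X ∪ Y := by
    rintro a ha (haX | haY)
    · exact hneg a ha haX
    · exact Set.disjoint_left.mp hY haY (hr.2 (r.neg_subset_atoms ha))
  obtain ⟨a, ha, haXY'⟩ := h r hr.1 hnegXY (hpos.trans Set.subset_union_left)
  exact ⟨a, ha, haXY'.resolve_right fun haY' =>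
    Set.disjoint_left.mp hY' haY' (head_mem_of_mem_botU hr ha)⟩

theorem isModel_reduct_partialEval (hU : isSplittingSet U P) (hY : Disjoint Y U)
    (hXX' : X ⊆ X') (hX' : X' ⊆ U) (h : isModel (reduct P (X ∪ Y)) (X' ∪ Y')) :
    isModel (reduct (partialEval U X (P \ botU U P)) Y) Y' := by
  rw [isModel_reduct_iff] at h
  rw [isModel_reduct_partialEval_iff]
  intro r hr hposX hnegX hnegY hposY'
  have hnegXY : ∀ a ∈ r.neg, a ∉ X ∪ Y := by
    rintro a ha (haX | haY)
    · exact hnegX a ha (hX' (hXX' haX)) haX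
    · exact hnegY a ⟨ha, Set.disjoint_left.mp hY haY⟩ haY
  have hposXY' : r.pos ⊆ X' ∪ Y' := by
    intro a ha
    by_cases haU : a ∈ U
    · exact Or.inl (hXX' (hposX a ha haU))
    · exact Or.inr (hposY' ⟨ha, haU⟩)
  obtain ⟨a, ha, haXY'⟩ := h r hr.1 hnegXY hposXY'
  exact ⟨a, ha, haXY'.resolve_left fun haX' =>
    head_notMem_of_mem_diff_botU hU hr ha (hX' haX')⟩

theorem isModel_reduct_of_botU_of_partialEval (hX : X ⊆ U) (hY' : Disjoint Y' U) (hX'X : X' ⊆ X)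
    (hbot : isModel (reduct (botU U P) X) X')
    (htop : isModel (reduct (partialEval U X (P \ botU U P)) Y) Y') :
    isModel (reduct P (X ∪ Y)) (X' ∪ Y') := by
  rw [isModel_reduct_iff] at hbot ⊢
  rw [isModel_reduct_partialEval_iff] at htop
  intro r hr hneg hpos
  have hposU : ∀ a ∈ r.pos, a ∈ U → a ∈ X' := fun a ha haU =>
    (hpos ha).resolve_right fun haY' => Set.disjoint_left.mp hY' haY' haU
  by_cases hrU : r.atoms ⊆ U
  · obtain ⟨a, ha, haX'⟩ := hbot r ⟨hr, hrU⟩ (fun a ha haX => hneg a ha (Or.inl haX))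
      fun a ha => hposU a ha (hrU (r.pos_subset_atoms ha))
    exact ⟨a, ha, Or.inl haX'⟩
  · obtain ⟨a, ha, haY'⟩ := htop r ⟨hr, fun hrB => hrU hrB.2⟩
      (fun a ha haU => hX'X (hposU a ha haU))
      (fun a ha _ haX => hneg a ha (Or.inl haX))
      (fun a ha haY => hneg a ha.1 (Or.inr haY))
      fun a ha => (hpos ha.1).resolve_left fun haX' => ha.2 (hX (hX'X haX'))
    exact ⟨a, ha, Or.inr haY'⟩

theorem isAnswerSet_botU_and_partialEval (hU : isSplittingSet U P) (hX : X ⊆ U)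
    (hY : Disjoint Y U) (h : isAnswerSet P (X ∪ Y)) :
    isAnswerSet (botU U P) X ∧ isAnswerSet (partialEval U X (P \ botU U P)) Y := by
  obtain ⟨hmod, hmin⟩ := h
  have hbot := isModel_reduct_botU hY hY hmod
  have htop := isModel_reduct_partialEval hU hY subset_rfl hX hmod
  refine ⟨⟨hbot, fun N hN a haX => ?_⟩, ⟨htop, fun N hN a haY => ?_⟩⟩
  · have hsub := hmin _ <| isModel_reduct_of_botU_of_partialEval hX hY Set.inter_subset_right
      (isModel_reduct_inter hN hbot) htop
    exact ((hsub (Or.inl haX)).resolve_right fun haY =>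
      Set.disjoint_left.mp hY haY (hX haX)).1
  · have hsub := hmin _ <| isModel_reduct_of_botU_of_partialEval hX
      (hY.mono_left Set.inter_subset_right) subset_rfl hbot (isModel_reduct_inter hN htop)
    exact ((hsub (Or.inr haY)).resolve_left fun haX =>
      Set.disjoint_left.mp hY haY (hX haX)).1

theorem isAnswerSet_union_of_botU_of_partialEval (hU : isSplittingSet U P)
    (hX : isAnswerSet (botU U P) X) (hY : isAnswerSet (partialEval U X (P \ botU U P)) Y) :
    isAnswerSet P (X ∪ Y) := by
  have hXU : X ⊆ U := hX.subset_of_head_mem fun _ hr _ => head_mem_of_mem_botU hr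
  have hYU : Disjoint Y U := Set.subset_compl_iff_disjoint_right.mp <|
    hY.subset_of_head_mem fun _ hr _ => head_notMem_of_mem_partialEval hU hr
  refine ⟨isModel_reduct_of_botU_of_partialEval hXU hYU subset_rfl hX.1 hY.1, fun N hN => ?_⟩
  rw [← Set.inter_union_sdiff N U] at hN ⊢
  have hXN : X ⊆ N ∩ U := hX.2 _ (isModel_reduct_botU hYU Set.disjoint_sdiff_left hN)
  have hYN : Y ⊆ N \ U := hY.2 _ (isModel_reduct_partialEval hU hYU hXN Set.inter_subset_right hN)
  exact Set.union_subset_union hXN hYN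

end Splitting

/-- The splitting set theorem: for `U` a splitting set of `P`, `M` is an answer
set of `P` iff `M = X ∪ Y` where `X` is an answer set of `bot_U(P)` and `Y` is
an answer set of `e_U(P \ bot_U(P), X)`. -/
theorem splitting_set_theorem {A : Type} (U : Set A) (P : Set (Rule A))
    (hU : isSplittingSet U P) (M : Set A) :
    isAnswerSet P M ↔
      ∃ X Y : Set A, M = X ∪ Y ∧ isAnswerSet (botU U P) X ∧
        isAnswerSet (partialEval U X (P \ botU U P)) Y := by
  constructor
  · intro hM
    rw [← Set.inter_union_sdiff M U] at hM
    exact ⟨M ∩ U, M \ U, (Set.inter_union_sdiff M U).symm,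
      isAnswerSet_botU_and_partialEval hU Set.inter_subset_right Set.disjoint_sdiff_left hM⟩
  · rintro ⟨X, Y, rfl, hX, hY⟩
    exact isAnswerSet_union_of_botU_of_partialEval hU hX hY
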